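/- Let K be a field, let A be a finite-dimensional separable K-algebra, and let M be a simple left A-module. Then the endomorphism algebra End_A(M) (a finite-dimensional division algebra over K by Schur's lemma) is a separable K-algebra. -/

import Mathlib

open scoped TensorProduct

/-- A separable `K`-algebra: there is a `K`-linear splitting `θ : A → A ⊗[K] A` of the
multiplication map that is a homomorphism of `A`-bimodules, i.e. `μ ∘ θ = id` and
`θ(a b c) = a · θ(b) · c`, where `a · (x ⊗ y) · c = (a x) ⊗ (y c)`. -/
def IsSeparableKAlgebra (K A : Type*) [CommRing K] [Ring A] [Algebra K A] : Prop :=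
  ∃ θ : A →ₗ[K] A ⊗[K] A,
    (∀ a : A, LinearMap.mul' K A (θ a) = a) ∧
    (∀ a b c : A, θ (a * b * c) =
      TensorProduct.map (LinearMap.mulLeft K a) (LinearMap.mulRight K c) (θ b))

/-!
A separable algebra has a separability idempotent `∑ xᵢ ⊗ yᵢ`: `∑ xᵢ yᵢ = 1` and
`∑ b xᵢ ⊗ yᵢ = ∑ xᵢ ⊗ yᵢ b`. As in Maschke's theorem, averaging a `K`-linear map `φ` to
`∑ xᵢ φ (yᵢ ·)` makes it `A`-linear, so `A` is semisimple and the surjection `a ↦ a • m₀` onto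
the simple module `M` has an `A`-linear section `σ`. Every endomorphism `d` of `M` equals
`E (d m₀)`, where `E m : n ↦ σ n • m`, and `E m * E m' = E (σ m' • m)`. Averaging on the
right, the right ideal spanned by the `σ m * a` contains an element `ε = ∑ σ mᵣ * aᵣ` acting as
the identity on `M`, and then `∑ E ((aᵣ yᵢ) • m₀) ⊗ E (xᵢ • mᵣ)` is a separability idempotent
of `End_A(M)`.
-/

open TensorProduct

/-- `∑ i ∈ s, x i ⊗ₜ y i` is a separability idempotent. -/
structure IsSeparabilityFamily (K : Type*) {A ι : Type*} [CommRing K] [Ring A] [Algebra K A]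
    (s : Finset ι) (x y : ι → A) : Prop where
  sum_mul : ∑ i ∈ s, x i * y i = 1
  sum_mul_tmul_eq (b : A) : ∑ i ∈ s, (b * x i) ⊗ₜ[K] y i = ∑ i ∈ s, x i ⊗ₜ[K] (y i * b)

section

variable {K A : Type*} [CommRing K] [Ring A] [Algebra K A]

theorem IsSeparableKAlgebra.exists_isSeparabilityFamily (h : IsSeparableKAlgebra K A) :
    ∃ s : Finset (A × A), IsSeparabilityFamily K s Prod.fst Prod.snd := by
  obtain ⟨θ, hμ, hθ⟩ := h
  obtain ⟨s, hs⟩ := exists_finset (θ 1)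
  refine ⟨s, ⟨?_, fun b ↦ ?_⟩⟩
  · simpa [hs] using hμ 1
  · have h : map (LinearMap.mulLeft K b) (LinearMap.mulRight K 1) (θ 1) =
        map (LinearMap.mulLeft K 1) (LinearMap.mulRight K b) (θ 1) := by
      rw [← hθ, ← hθ, mul_one, mul_one, one_mul, one_mul]
    simpa [hs, map_sum] using h

namespace IsSeparabilityFamily

variable {ι : Type*} {s : Finset ι} {x y : ι → A}

theorem sum_apply_mul_left (h : IsSeparabilityFamily K s x y) {V : Type*} [AddCommGroup V]
    [Module K V] (F : A →ₗ[K] A →ₗ[K] V) (b : A) :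
    ∑ i ∈ s, F (b * x i) (y i) = ∑ i ∈ s, F (x i) (y i * b) := by
  simpa using congrArg (lift F) (h.sum_mul_tmul_eq b)

theorem isSeparableKAlgebra (h : IsSeparabilityFamily K s x y) : IsSeparableKAlgebra K A := by
  refine ⟨∑ i ∈ s, (TensorProduct.mk K A A).flip (y i) ∘ₗ LinearMap.mulRight K (x i),
    fun a ↦ ?_, fun a b c ↦ ?_⟩
  · simp [mul_assoc, ← Finset.mul_sum, h.sum_mul]
  · simpa [map_sum, mul_assoc] using
      congrArg (map (LinearMap.mulLeft K (a * b)) LinearMap.id) (h.sum_mul_tmul_eq c)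

end IsSeparabilityFamily

end

namespace LinearMap

variable (K : Type*) {A M : Type*} [CommRing K] [Ring A] [AddCommGroup M] [Module K M] [Module A M]
  [SMulCommClass A K M]

def smulRightEnd (σ : M →ₗ[A] A) : M →ₗ[K] Module.End A M where
  toFun := σ.smulRight
  map_add' m m' := by ext; simp
  map_smul' c m := by ext; simp [smul_comm]

variable {K} (σ : M →ₗ[A] A)

@[simp]
theorem smulRightEnd_apply (m n : M) : σ.smulRightEnd K m n = σ n • m := rfl

theorem mul_smulRightEnd (d : Module.End A M) (m : M) :
    d * σ.smulRightEnd K m = σ.smulRightEnd K (d m) := by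
  ext; simp

theorem smulRightEnd_mul_smulRightEnd (m m' : M) :
    σ.smulRightEnd K m * σ.smulRightEnd K m' = σ.smulRightEnd K (σ m' • m) := by
  ext; simp [smul_smul]

variable {σ} {m₀ : M} (hσ : ∀ n, σ n • m₀ = n)
include hσ

theorem smulRightEnd_apply_self (d : Module.End A M) : σ.smulRightEnd K (d m₀) = d := by
  ext n
  conv_rhs => rw [← hσ n]
  simp

theorem smulRightEnd_mul (d : Module.End A M) (m : M) :
    σ.smulRightEnd K m * d = σ.smulRightEnd K (σ (d m₀) • m) := by
  conv_lhs => rw [← smulRightEnd_apply_self (K := K) hσ d]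
  rw [smulRightEnd_mul_smulRightEnd]

end LinearMap

namespace IsSeparabilityFamily

variable {K A M ι : Type*} [CommRing K] [Ring A] [Algebra K A] [AddCommGroup M] [Module K M]
  [Module A M] [IsScalarTower K A M] [SMulCommClass A K M] {s : Finset ι} {x y : ι → A}
  {σ : M →ₗ[A] A} {m₀ : M}

theorem smulRightEnd (h : IsSeparabilityFamily K s x y) (hσ : ∀ n, σ n • m₀ = n)
    {t : Finset (M × A)} (ht : ∀ n : M, (∑ r ∈ t, σ r.1 * r.2) • n = n) :
    IsSeparabilityFamily K (s ×ˢ t) (fun i ↦ σ.smulRightEnd K ((i.2.2 * y i.1) • m₀))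
      (fun i ↦ σ.smulRightEnd K (x i.1 • i.2.1)) where
  sum_mul := by
    calc _ = σ.smulRightEnd K (∑ i ∈ s, ∑ r ∈ t, σ (x i • r.1) • (r.2 * y i) • m₀) := by
          simp only [Finset.sum_product, LinearMap.smulRightEnd_mul_smulRightEnd, map_sum]
      _ = σ.smulRightEnd K (∑ i ∈ s, x i • (∑ r ∈ t, σ r.1 * r.2) • y i • m₀) := by
          simp only [map_smul, smul_eq_mul, smul_smul, Finset.sum_mul, Finset.smul_sum,
            Finset.sum_smul, mul_assoc]
      _ = σ.smulRightEnd K ((1 : Module.End A M) m₀) := by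
          simp only [ht, smul_smul, ← Finset.sum_smul, h.sum_mul, one_smul, Module.End.one_apply]
      _ = 1 := LinearMap.smulRightEnd_apply_self hσ 1
  sum_mul_tmul_eq d := by
    have hd : ∀ a : A, d (a • m₀) = (a * σ (d m₀)) • m₀ := fun a ↦ by
      rw [map_smul, ← smul_smul, hσ]
    simp only [LinearMap.mul_smulRightEnd, LinearMap.smulRightEnd_mul hσ, hd, smul_smul,
      Finset.sum_product]
    rw [Finset.sum_comm, Finset.sum_comm (s := s)]
    refine Finset.sum_congr rfl fun r _ ↦ ?_
    have := h.sum_apply_mul_left (((TensorProduct.mk K _ _).compl₁₂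
      (σ.smulRightEnd K ∘ₗ (LinearMap.toSpanSingleton A M m₀).restrictScalars K ∘ₗ
        LinearMap.mulLeft K r.2)
      (σ.smulRightEnd K ∘ₗ (LinearMap.toSpanSingleton A M r.1).restrictScalars K)).flip)
      (σ (d m₀))
    simp only [LinearMap.flip_apply, LinearMap.compl₁₂_apply, mk_apply, LinearMap.coe_comp,
      Function.comp_apply, LinearMap.coe_restrictScalars, LinearMap.toSpanSingleton_apply,
      LinearMap.mulLeft_apply] at this
    simpa only [mul_assoc] using this.symm

end IsSeparabilityFamily

namespace IsSeparabilityFamily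

variable {K A ι : Type*} [Field K] [Ring A] [Algebra K A] {s : Finset ι} {x y : ι → A}
variable {V W : Type*} [AddCommGroup V] [Module K V] [Module A V] [IsScalarTower K A V]
  [AddCommGroup W] [Module K W] [Module A W] [IsScalarTower K A W]

def average (h : IsSeparabilityFamily K s x y) (φ : W →ₗ[K] V) : W →ₗ[A] V where
  toFun w := ∑ i ∈ s, x i • φ (y i • w)
  map_add' w w' := by simp [Finset.sum_add_distrib]
  map_smul' b w := by
    have := h.sum_apply_mul_left
      ((Algebra.lsmul K K V).toLinearMap.compl₂
        (φ ∘ₗ (LinearMap.toSpanSingleton A W w).restrictScalars K)) b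
    simp only [LinearMap.compl₂_apply, LinearMap.coe_comp, Function.comp_apply,
      LinearMap.coe_restrictScalars, LinearMap.toSpanSingleton_apply, AlgHom.toLinearMap_apply,
      Algebra.lsmul_coe, ← smul_smul] at this
    rw [RingHom.id_apply, Finset.smul_sum, this]

theorem average_apply (h : IsSeparabilityFamily K s x y) (φ : W →ₗ[K] V) (w : W) :
    h.average φ w = ∑ i ∈ s, x i • φ (y i • w) := rfl

theorem average_comp (h : IsSeparabilityFamily K s x y) {φ : W →ₗ[K] V} {f : V →ₗ[A] W}
    (hφ : ∀ v, φ (f v) = v) (v : V) : h.average φ (f v) = v := by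
  simp only [average_apply, ← map_smul, hφ, smul_smul, ← Finset.sum_smul, h.sum_mul, one_smul]

theorem exists_leftInverse_of_injective (h : IsSeparabilityFamily K s x y) (f : V →ₗ[A] W)
    (hf : LinearMap.ker f = ⊥) : ∃ g : W →ₗ[A] V, g ∘ₗ f = LinearMap.id :=
  ⟨h.average (f.restrictScalars K).leftInverse, LinearMap.ext <| h.average_comp <|
    LinearMap.leftInverse_apply_of_inj (by simpa [LinearMap.ker_restrictScalars] using hf)⟩

theorem isSemisimpleModule (h : IsSeparabilityFamily K s x y) : IsSemisimpleModule A V where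
  exists_isCompl p := by
    obtain ⟨g, hg⟩ := h.exists_leftInverse_of_injective p.subtype p.ker_subtype
    exact ⟨LinearMap.ker g, LinearMap.isCompl_of_proj (DFunLike.congr_fun hg)⟩

theorem exists_mul_eq_self (h : IsSeparabilityFamily K s x y) (I : Submodule K A)
    (hI : ∀ u ∈ I, ∀ a, u * a ∈ I) : ∃ ε ∈ I, ∀ u ∈ I, ε * u = u := by
  set φ := I.subtype.leftInverse
  have hφ : ∀ u ∈ I, (φ u : A) = u := fun u hu ↦
    congrArg Subtype.val (LinearMap.leftInverse_apply_of_inj I.ker_subtype ⟨u, hu⟩)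
  refine ⟨∑ i ∈ s, (φ (x i) : A) * y i, I.sum_mem fun i _ ↦ hI _ (φ _).2 _, fun u hu ↦ ?_⟩
  have := h.sum_apply_mul_left (LinearMap.mul K A ∘ₗ I.subtype ∘ₗ φ) u
  simp only [LinearMap.coe_comp, Function.comp_apply, Submodule.coe_subtype,
    LinearMap.mul_apply'] at this
  calc (∑ i ∈ s, (φ (x i) : A) * y i) * u = ∑ i ∈ s, (φ (u * x i) : A) * y i := by
        simp only [this, Finset.sum_mul, mul_assoc]
    _ = u := by
        simp only [hφ _ (hI u hu _), mul_assoc, ← Finset.mul_sum, h.sum_mul, mul_one]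

variable {M : Type*} [AddCommGroup M] [Module K M] [Module A M] [IsScalarTower K A M]
  {σ : M →ₗ[A] A} {m₀ : M}

theorem exists_sum_mul_smul_eq (h : IsSeparabilityFamily K s x y) (hσ : ∀ n, σ n • m₀ = n) :
    ∃ t : Finset (M × A), ∀ n : M, (∑ r ∈ t, σ r.1 * r.2) • n = n := by
  set Φ : M ⊗[K] A →ₗ[K] A := lift (LinearMap.mul K A ∘ₗ σ.restrictScalars K)
  have hΦ : ∀ u ∈ LinearMap.range Φ, ∀ a, u * a ∈ LinearMap.range Φ := by
    rintro _ ⟨t, rfl⟩ a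
    have : Φ ∘ₗ map LinearMap.id (LinearMap.mulRight K a) = LinearMap.mulRight K a ∘ₗ Φ :=
      ext' fun m b ↦ by simp [Φ, mul_assoc]
    exact ⟨_, DFunLike.congr_fun this t⟩
  obtain ⟨_, ⟨t, rfl⟩, hε⟩ := h.exists_mul_eq_self _ hΦ
  obtain ⟨t, rfl⟩ := exists_finset t
  refine ⟨t, fun n ↦ ?_⟩
  have := hε (σ n) ⟨n ⊗ₜ 1, by simp [Φ]⟩
  simp only [Φ, map_sum, lift.tmul, LinearMap.coe_comp, Function.comp_apply,
    LinearMap.coe_restrictScalars, LinearMap.mul_apply'] at this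
  conv_lhs => rw [← hσ n, smul_smul, this, hσ]

end IsSeparabilityFamily

theorem stmt18_general (K A : Type*) [Field K] [Ring A] [Algebra K A]
    (hA : IsSeparableKAlgebra K A)
    (M : Type*) [AddCommGroup M] [Module K M] [Module A M]
    [IsScalarTower K A M] [SMulCommClass A K M]
    [IsSimpleModule A M] :
    IsSeparableKAlgebra K (Module.End A M) := by
  obtain ⟨s, hs⟩ := hA.exists_isSeparabilityFamily
  have : IsSemisimpleRing A := hs.isSemisimpleModule
  have := Module.projective_of_isSemisimpleRing A M
  have := IsSimpleModule.nontrivial A M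
  obtain ⟨m₀, hm₀⟩ := exists_ne (0 : M)
  obtain ⟨σ, hσ⟩ := (LinearMap.toSpanSingleton A M m₀).exists_rightInverse_of_surjective
    (LinearMap.range_eq_top.2 (IsSimpleModule.toSpanSingleton_surjective A hm₀))
  have hσ' : ∀ n, σ n • m₀ = n := fun n ↦ DFunLike.congr_fun hσ n
  obtain ⟨t, ht⟩ := hs.exists_sum_mul_smul_eq hσ'
  exact (hs.smulRightEnd hσ' ht).isSeparableKAlgebra

/-- For a finite-dimensional separable `K`-algebra `A` and a simple left `A`-module `M`,
the endomorphism algebra `End_A(M)` is a separable `K`-algebra. -/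
theorem stmt18 (K A : Type*) [Field K] [Ring A] [Algebra K A] [FiniteDimensional K A]
    (hA : IsSeparableKAlgebra K A)
    (M : Type*) [AddCommGroup M] [Module K M] [Module A M]
    [IsScalarTower K A M] [SMulCommClass A K M]
    [IsSimpleModule A M] :
    IsSeparableKAlgebra K (Module.End A M) :=
  stmt18_general K A hA M
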